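/- Let b(t) = ∑_{v=0}^V b_v P_v(t/T) be a Bezier trajectory on [0,T] and suppose a constraint function h : ℝ → ℝ is Lipschitz with constant L_h along b, i.e., |h(b(t)) - h(b(s))| ≤ L_h·L_b·|t-s| where L_b is a Lipschitz constant of b on [0,T]. If h(b(t_i)) ≤ -ε at each of N points t_1 < … < t_N with consecutive gaps at most δ (and t_1 ≤ δ/2, T - t_N ≤ δ/2), and L_h·L_b·δ/2 ≤ ε, then h(b(t)) ≤ 0 for all t ∈ [0,T]. -/

import Mathlib

/-!
Every time in `[0, T]` lies within `δ / 2` of a node, and over that distance `h ∘ b` rises by at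
most `L_h L_b δ / 2 ≤ ε` above its value `≤ -ε` at the node.
-/

/-- The `v`-th Bernstein basis polynomial of degree `V` on `[0,1]`. -/
noncomputable def bern (V v : ℕ) (t : ℝ) : ℝ := (V.choose v : ℝ) * t ^ v * (1 - t) ^ (V - v)

theorem exists_abs_sub_le_half_of_succ_sub_le {n : ℕ} {tn : Fin (n + 1) → ℝ} {δ : ℝ}
    (hgap : ∀ i : Fin n, tn i.succ - tn i.castSucc ≤ δ) {t : ℝ}
    (ht : t ∈ Set.Icc (tn 0 - δ / 2) (tn (Fin.last n) + δ / 2)) :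
    ∃ i, |t - tn i| ≤ δ / 2 := by
  induction n with
  | zero =>
    rw [Fin.last_zero] at ht
    exact ⟨0, abs_sub_le_iff.2 ⟨by linarith [ht.2], by linarith [ht.1]⟩⟩
  | succ n ih =>
    by_cases hlow : t ≤ tn (Fin.last n).castSucc + δ / 2
    · obtain ⟨i, hi⟩ := ih (tn := tn ∘ Fin.castSucc) (fun i => hgap i.castSucc) ⟨ht.1, hlow⟩
      exact ⟨i.castSucc, hi⟩
    · have hlast := hgap (Fin.last n)
      rw [Fin.succ_last] at hlast
      exact ⟨Fin.last (n + 1), abs_sub_le_iff.2 ⟨by linarith [ht.2], by linarith⟩⟩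

/-- Soundness of constraint sampling: if `h ∘ b` is Lipschitz along the Bezier
trajectory `b` with constant `L_h·L_b`, the constraint holds with margin `ε` at `N`
time nodes with gaps at most `δ` (and half-gaps at the endpoints), and
`L_h·L_b·δ/2 ≤ ε`, then `h(b(t)) ≤ 0` on all of `[0, T]`. -/
theorem constraint_sampling_sound
    (T Lh Lb ε δ : ℝ) (hε : 0 < ε)
    (b : ℝ → ℝ)
    (h : ℝ → ℝ)
    (hlip : ∀ s ∈ Set.Icc (0 : ℝ) T, ∀ t ∈ Set.Icc (0 : ℝ) T,
      |h (b t) - h (b s)| ≤ Lh * Lb * |t - s|)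
    (N : ℕ) (hN : 1 ≤ N) (tn : Fin N → ℝ)
    (hin : ∀ i : Fin N, tn i ∈ Set.Icc (0 : ℝ) T)
    (hgap : ∀ i j : Fin N, (j : ℕ) = (i : ℕ) + 1 → tn j - tn i ≤ δ)
    (hfirst : tn ⟨0, by omega⟩ ≤ δ / 2)
    (hlast : T - tn ⟨N - 1, by omega⟩ ≤ δ / 2)
    (hmargin : ∀ i : Fin N, h (b (tn i)) ≤ -ε)
    (hδε : Lh * Lb * δ / 2 ≤ ε) :
    ∀ t ∈ Set.Icc (0 : ℝ) T, h (b t) ≤ 0 := by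
  intro t ht
  obtain ⟨n, rfl⟩ := Nat.exists_eq_add_of_le' hN
  have hfirst' : tn 0 ≤ δ / 2 := hfirst
  have hlast' : T - tn (Fin.last n) ≤ δ / 2 := hlast
  obtain ⟨i, hi⟩ := exists_abs_sub_le_half_of_succ_sub_le (t := t)
    (fun i => hgap _ _ (by simp)) ⟨by linarith [ht.1], by linarith [ht.2]⟩
  have hstep : h (b t) - h (b (tn i)) ≤ Lh * Lb * |t - tn i| :=
    (le_abs_self _).trans (hlip _ (hin i) t ht)
  have hdrift : Lh * Lb * |t - tn i| ≤ ε := by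
    rcases le_total 0 (Lh * Lb) with hK | hK
    · calc Lh * Lb * |t - tn i| ≤ Lh * Lb * (δ / 2) := by gcongr
        _ ≤ ε := by linarith
    · exact (mul_nonpos_of_nonpos_of_nonneg hK (abs_nonneg _)).trans hε.le
  linarith [hmargin i]
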